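/- The number of binary shuffle squares of length 2n containing exactly two 1's equals 3n(n-1)/2 + 1, for every n ≥ 1. -/
import Mathlib

inductive Interleave {α : Type*} : List α → List α → List α → Prop
  | nil : Interleave [] [] []
  | left {a : α} {l₁ l₂ l : List α} : Interleave l₁ l₂ l → Interleave (a :: l₁) l₂ (a :: l)
  | right {a : α} {l₁ l₂ l : List α} : Interleave l₁ l₂ l → Interleave l₁ (a :: l₂) (a :: l)

def IsShuffleSquare {α : Type*} (W : List α) : Prop := ∃ U, Interleave U U W
def Zb (k : ℕ) : List Bool := List.replicate k false

lemma interleave_length {α : Type*} {l₁ l₂ l : List α} (h : Interleave l₁ l₂ l) :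
    l.length = l₁.length + l₂.length := by
  induction h <;> simp [*] <;> omega

lemma interleave_count {l₁ l₂ l : List Bool} (b : Bool) (h : Interleave l₁ l₂ l) :
    l.count b = l₁.count b + l₂.count b := by
  induction h <;> simp [List.count_cons, *] <;> omega

lemma interleave_append {α : Type*} {a b c d e f : List α} (h1 : Interleave a b c)
    (h2 : Interleave d e f) : Interleave (a ++ d) (b ++ e) (c ++ f) := by
  induction h1 with
  | nil => simpa
  | left _ ih => exact .left ih
  | right _ ih => exact .right ih

lemma interleave_nil_left {α : Type*} (l : List α) : Interleave [] l l := by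
  induction l with
  | nil => exact .nil
  | cons x t ih => exact .right ih

lemma interleave_nil_right {α : Type*} (l : List α) : Interleave l [] l := by
  induction l with
  | nil => exact .nil
  | cons x t ih => exact .left ih

lemma interleave_replicate {α : Type*} (p q : ℕ) (x : α) :
    Interleave (List.replicate p x) (List.replicate q x) (List.replicate (p + q) x) := by
  induction p with
  | zero => simpa using interleave_nil_left _
  | succ k ih => simpa [List.replicate_succ, Nat.succ_add] using Interleave.left ih
lemma Zb_succ (k : ℕ) : Zb (k+1) = false :: Zb k := by rw [Zb, List.replicate_succ]; rfl

lemma Zb_add (p q : ℕ) : Zb p ++ Zb q = Zb (p + q) := by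
  rw [Zb, Zb, Zb, List.replicate_add]

lemma interleave_Zb (p q r : ℕ) (h : p + q = r) : Interleave (Zb p) (Zb q) (Zb r) := by
  subst h; exact interleave_replicate p q false
lemma interD : ∀ {l₁ l₂ l : List Bool}, Interleave l₁ l₂ l → ∀ p q, l₁ = Zb p → l₂ = Zb q →
    l = Zb (p + q) := by
  intro l₁ l₂ l h
  induction h with
  | nil => intro p q h1 h2; simp [Zb] at h1 h2 ⊢; omega
  | @left a t₁ t₂ t _ ih =>
    intro p q h1 h2
    cases p with
    | zero => simp [Zb] at h1
    | succ k =>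
      rw [Zb, List.replicate_succ] at h1
      obtain ⟨rfl, rfl⟩ : a = false ∧ t₁ = Zb k := by
        have := List.cons_eq_cons.mp h1; exact ⟨this.1, this.2⟩
      have := ih k q rfl h2
      rw [this]
      show _ = Zb (k + 1 + q)
      rw [Zb, Zb]
      have : k + 1 + q = (k + q) + 1 := by omega
      rw [this, List.replicate_succ]
  | @right a t₁ t₂ t _ ih =>
    intro p q h1 h2
    cases q with
    | zero => simp [Zb] at h2
    | succ k =>
      rw [Zb, List.replicate_succ] at h2
      obtain ⟨rfl, rfl⟩ : a = false ∧ t₂ = Zb k := by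
        have := List.cons_eq_cons.mp h2; exact ⟨this.1, this.2⟩
      have := ih p k h1 rfl
      rw [this]
      show _ = Zb (p + (k + 1))
      rw [Zb, Zb]
      have : p + (k + 1) = (p + k) + 1 := by omega
      rw [this, List.replicate_succ]
lemma interC : ∀ {l₁ l₂ l : List Bool}, Interleave l₁ l₂ l → ∀ b c d, l₁ = Zb b →
    l₂ = Zb c ++ true :: Zb d →
    ∃ g, l = Zb g ++ true :: Zb (b + c + d - g) ∧ c ≤ g ∧ g ≤ c + b := by
  intro l₁ l₂ l h
  induction h with
  | nil => intro b c d h1 h2; simp [Zb] at h2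
  | @left a t₁ t₂ t _ ih =>
    intro b c d h1 h2
    cases b with
    | zero => simp [Zb] at h1
    | succ k =>
      rw [Zb_succ] at h1
      obtain ⟨rfl, rfl⟩ : a = false ∧ t₁ = Zb k :=
        ⟨(List.cons_eq_cons.mp h1).1, (List.cons_eq_cons.mp h1).2⟩
      obtain ⟨g, hg, hg1, hg2⟩ := ih k c d rfl h2
      refine ⟨g + 1, ?_, by omega, by omega⟩
      rw [hg, Zb_succ]
      have : k + 1 + c + d - (g + 1) = k + c + d - g := by omega
      rw [this]; rfl
  | @right a t₁ t₂ t hh ih =>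
    intro b c d h1 h2
    cases c with
    | zero =>
      simp only [Zb, List.replicate_zero, List.nil_append] at h2
      obtain ⟨rfl, rfl⟩ : a = true ∧ t₂ = Zb d :=
        ⟨(List.cons_eq_cons.mp h2).1, (List.cons_eq_cons.mp h2).2⟩
      refine ⟨0, ?_, le_refl _, by omega⟩
      have := interD hh b d h1 rfl
      rw [this]
      simp [Zb]
    | succ k =>
      rw [Zb_succ, List.cons_append] at h2
      obtain ⟨rfl, rfl⟩ : a = false ∧ t₂ = Zb k ++ true :: Zb d :=
        ⟨(List.cons_eq_cons.mp h2).1, (List.cons_eq_cons.mp h2).2⟩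
      obtain ⟨g, hg, hg1, hg2⟩ := ih b k d h1 rfl
      refine ⟨g + 1, ?_, by omega, by omega⟩
      rw [hg, Zb_succ]
      have : b + (k + 1) + d - (g + 1) = b + k + d - g := by omega
      rw [this]; rfl

lemma interC' : ∀ {l₁ l₂ l : List Bool}, Interleave l₁ l₂ l → ∀ b c d, l₂ = Zb b →
    l₁ = Zb c ++ true :: Zb d →
    ∃ g, l = Zb g ++ true :: Zb (b + c + d - g) ∧ c ≤ g ∧ g ≤ c + b := by
  intro l₁ l₂ l h
  induction h with
  | nil => intro b c d h1 h2; simp [Zb] at h2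
  | @left a t₁ t₂ t hh ih =>
    intro b c d h1 h2
    cases c with
    | zero =>
      simp only [Zb, List.replicate_zero, List.nil_append] at h2
      obtain ⟨rfl, rfl⟩ : a = true ∧ t₁ = Zb d :=
        ⟨(List.cons_eq_cons.mp h2).1, (List.cons_eq_cons.mp h2).2⟩
      refine ⟨0, ?_, le_refl _, by omega⟩
      have := interD hh d b rfl h1
      rw [this]
      have : b + 0 + d - 0 = d + b := by omega
      rw [this]; simp [Zb]
    | succ k =>
      rw [Zb_succ, List.cons_append] at h2
      obtain ⟨rfl, rfl⟩ : a = false ∧ t₁ = Zb k ++ true :: Zb d :=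
        ⟨(List.cons_eq_cons.mp h2).1, (List.cons_eq_cons.mp h2).2⟩
      obtain ⟨g, hg, hg1, hg2⟩ := ih b k d h1 rfl
      refine ⟨g + 1, ?_, by omega, by omega⟩
      rw [hg, Zb_succ]
      have : b + (k + 1) + d - (g + 1) = b + k + d - g := by omega
      rw [this]; rfl
  | @right a t₁ t₂ t _ ih =>
    intro b c d h1 h2
    cases b with
    | zero => simp [Zb] at h1
    | succ k =>
      rw [Zb_succ] at h1
      obtain ⟨rfl, rfl⟩ : a = false ∧ t₂ = Zb k :=
        ⟨(List.cons_eq_cons.mp h1).1, (List.cons_eq_cons.mp h1).2⟩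
      obtain ⟨g, hg, hg1, hg2⟩ := ih k c d rfl h2
      refine ⟨g + 1, ?_, by omega, by omega⟩
      rw [hg, Zb_succ]
      have : k + 1 + c + d - (g + 1) = k + c + d - g := by omega
      rw [this]; rfl
lemma interB : ∀ {l₁ l₂ l : List Bool}, Interleave l₁ l₂ l → ∀ a b c d,
    l₁ = Zb a ++ true :: Zb b → l₂ = Zb c ++ true :: Zb d →
    ∃ i g, l = Zb i ++ true :: Zb g ++ true :: Zb (a + b + c + d - i - g)
      ∧ min a c ≤ i ∧ i ≤ a + c ∧ a + c ≤ i + g ∧ i + g ≤ a + c + max b d := by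
  intro l₁ l₂ l h
  induction h with
  | nil => intro a b c d h1 h2; simp [Zb] at h1
  | @left x t₁ t₂ t hh ih =>
    intro a b c d h1 h2
    cases a with
    | zero =>
      simp only [Zb, List.replicate_zero, List.nil_append] at h1
      obtain ⟨rfl, rfl⟩ : x = true ∧ t₁ = Zb b :=
        ⟨(List.cons_eq_cons.mp h1).1, (List.cons_eq_cons.mp h1).2⟩
      obtain ⟨g, hg, hg1, hg2⟩ := interC hh b c d rfl h2
      refine ⟨0, g, ?_, by omega, by omega, by omega, by omega⟩
      rw [hg]
      have : 0 + b + c + d - 0 - g = b + c + d - g := by omega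
      rw [this]
      simp [Zb]
    | succ k =>
      rw [Zb_succ, List.cons_append] at h1
      obtain ⟨rfl, rfl⟩ : x = false ∧ t₁ = Zb k ++ true :: Zb b :=
        ⟨(List.cons_eq_cons.mp h1).1, (List.cons_eq_cons.mp h1).2⟩
      obtain ⟨i, g, hg, b1, b2, b3, b4⟩ := ih k b c d rfl h2
      refine ⟨i + 1, g, ?_, by omega, by omega, by omega, by omega⟩
      rw [hg, Zb_succ]
      have : k + 1 + b + c + d - (i + 1) - g = k + b + c + d - i - g := by omega
      rw [this]; rfl
  | @right x t₁ t₂ t hh ih =>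
    intro a b c d h1 h2
    cases c with
    | zero =>
      simp only [Zb, List.replicate_zero, List.nil_append] at h2
      obtain ⟨rfl, rfl⟩ : x = true ∧ t₂ = Zb d :=
        ⟨(List.cons_eq_cons.mp h2).1, (List.cons_eq_cons.mp h2).2⟩
      obtain ⟨g, hg, hg1, hg2⟩ := interC' hh d a b rfl h1
      refine ⟨0, g, ?_, by omega, by omega, by omega, by omega⟩
      rw [hg]
      have : a + b + 0 + d - 0 - g = d + a + b - g := by omega
      rw [this]
      simp [Zb]
    | succ k =>
      rw [Zb_succ, List.cons_append] at h2
      obtain ⟨rfl, rfl⟩ : x = false ∧ t₂ = Zb k ++ true :: Zb d :=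
        ⟨(List.cons_eq_cons.mp h2).1, (List.cons_eq_cons.mp h2).2⟩
      obtain ⟨i, g, hg, b1, b2, b3, b4⟩ := ih a b k d h1 rfl
      refine ⟨i + 1, g, ?_, by omega, by omega, by omega, by omega⟩
      rw [hg, Zb_succ]
      have : a + b + (k + 1) + d - (i + 1) - g = a + b + k + d - i - g := by omega
      rw [this]; rfl

lemma count_one_decomp : ∀ (U : List Bool), U.count true = 1 → ∃ a b, U = Zb a ++ true :: Zb b := by
  intro U
  induction U with
  | nil => intro h; simp at h
  | cons x t ih =>
    intro h
    cases x with
    | true =>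
      have h0 : t.count true = 0 := by
        simp [List.count_cons] at h; omega
      have ht : t = Zb t.length := by
        rw [Zb]
        apply List.eq_replicate_of_mem
        intro b hb
        cases b
        · rfl
        · exact absurd hb (List.count_eq_zero.mp h0)
      exact ⟨0, t.length, by rw [← ht]; simp [Zb]⟩
    | false =>
      have h1 : t.count true = 1 := by simpa [List.count_cons] using h
      obtain ⟨a, b, rfl⟩ := ih h1
      exact ⟨a + 1, b, by rw [Zb_succ]; rfl⟩

lemma decomp_inj : ∀ (i i' : ℕ) (r r' : List Bool),
    Zb i ++ true :: r = Zb i' ++ true :: r' → i = i' ∧ r = r' := by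
  intro i
  induction i with
  | zero =>
    intro i' r r' h
    cases i' with
    | zero => simpa [Zb] using h
    | succ k => rw [Zb_succ] at h; simp [Zb] at h
  | succ k ih =>
    intro i' r r' h
    cases i' with
    | zero => rw [Zb_succ] at h; simp [Zb] at h
    | succ k' =>
      rw [Zb_succ, Zb_succ] at h
      have := (List.cons_eq_cons.mp h).2
      obtain ⟨e1, e2⟩ := ih k' r r' this
      exact ⟨by omega, e2⟩

def fw (n : ℕ) (p : ℕ × ℕ) : List Bool :=
  Zb p.1 ++ true :: (Zb (p.2 - p.1 - 1) ++ true :: Zb (2*n - 1 - p.2))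

def Tset (n : ℕ) : Finset (ℕ × ℕ) :=
  ((Finset.range n).biUnion fun d => (Finset.range (2*n - 1 - d)).image fun i => (i, i + d + 1)) \
    ((Finset.range (n - 1)).image fun t => (2*t + 1, 2*t + 2))

lemma mem_Tset {n i j : ℕ} : (i, j) ∈ Tset n ↔
    (i < j ∧ j ≤ i + n ∧ j ≤ 2*n - 1 ∧ ¬(i % 2 = 1 ∧ j = i + 1)) := by
  simp only [Tset, Finset.mem_sdiff, Finset.mem_biUnion, Finset.mem_image, Finset.mem_range,
    Prod.mk.injEq]
  constructor
  · rintro ⟨⟨d, hd, i', hi', h1, h2⟩, h3⟩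
    refine ⟨by omega, by omega, by omega, ?_⟩
    rintro ⟨hodd, hj⟩
    exact h3 ⟨(i - 1) / 2, by omega, by omega, by omega⟩
  · rintro ⟨h1, h2, h3, h4⟩
    refine ⟨⟨j - i - 1, by omega, i, by omega, rfl, by omega⟩, ?_⟩
    rintro ⟨t, ht, hti, htj⟩
    exact h4 ⟨by omega, by omega⟩

lemma card_Tset {n : ℕ} (hn : 1 ≤ n) : (Tset n).card = 3 * n * (n - 1) / 2 + 1 := by
  have hsub : ((Finset.range (n - 1)).image fun t => (2*t + 1, 2*t + 2)) ⊆
      ((Finset.range n).biUnion fun d => (Finset.range (2*n - 1 - d)).image fun i => (i, i + d + 1)) := by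
    intro p hp
    simp only [Finset.mem_image, Finset.mem_range, Finset.mem_biUnion] at hp ⊢
    obtain ⟨t, ht, rfl⟩ := hp
    exact ⟨0, by omega, 2*t + 1, by omega, rfl⟩
  rw [Tset, Finset.card_sdiff_of_subset hsub]
  have hdisj : ∀ d1 ∈ Finset.range n, ∀ d2 ∈ Finset.range n, d1 ≠ d2 →
      Disjoint ((Finset.range (2*n - 1 - d1)).image fun i => (i, i + d1 + 1))
        ((Finset.range (2*n - 1 - d2)).image fun i => (i, i + d2 + 1)) := by
    intro d1 _ d2 _ hne
    rw [Finset.disjoint_left]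
    intro p hp1 hp2
    simp only [Finset.mem_image, Finset.mem_range] at hp1 hp2
    obtain ⟨i1, _, rfl⟩ := hp1
    obtain ⟨i2, _, h2⟩ := hp2
    have := (Prod.mk.injEq .. ▸ h2)
    simp only [Prod.mk.injEq] at h2
    omega
  rw [Finset.card_biUnion hdisj]
  have hcim : ∀ d, ((Finset.range (2*n - 1 - d)).image fun i => (i, i + d + 1)).card = 2*n - 1 - d := by
    intro d
    rw [Finset.card_image_of_injective _ (fun a b h => by simpa using (Prod.mk.injEq .. ▸ h).1),
      Finset.card_range]
  simp only [hcim]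
  have hcrem : ((Finset.range (n - 1)).image fun t => (2*t + 1, 2*t + 2)).card = n - 1 := by
    rw [Finset.card_image_of_injective _ (fun a b h => by
      simp only [Prod.mk.injEq] at h; omega), Finset.card_range]
  rw [hcrem]
  have e1 : ∀ d ∈ Finset.range n, 2*n - 1 - d = n + (n - 1 - d) := by
    intro d hd
    simp only [Finset.mem_range] at hd
    omega
  rw [Finset.sum_congr rfl e1, Finset.sum_add_distrib, Finset.sum_const, Finset.card_range,
    Finset.sum_range_reflect (fun j => j) n]
  have hq := Finset.sum_range_id_mul_two n
  set q := ∑ i ∈ Finset.range n, i with hqdef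
  have hmm : n * n = n * (n - 1) + n := by
    cases n with
    | zero => simp
    | succ k => simp [Nat.succ_sub_one]; ring
  have h3 : 3 * n * (n - 1) = 3 * (n * (n - 1)) := by ring
  rw [h3]
  generalize hs : n * (n - 1) = s at hq hmm ⊢
  simp only [smul_eq_mul]
  omega
lemma backward_shuffle {n i j : ℕ} (hn : 1 ≤ n) (h1 : i < j) (h2 : j ≤ i + n)
    (h3 : j ≤ 2*n - 1) (h4 : ¬(i % 2 = 1 ∧ j = i + 1)) : IsShuffleSquare (fw n (i, j)) := by
  set a := max (j - n) ((i + 1) / 2) with ha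
  have hai : a ≤ i := by omega
  have hai2 : i ≤ 2 * a := by omega
  have haj : 2 * a + 1 ≤ j := by omega
  have hjn : a ≥ j - n := by omega
  have han : a ≤ n - 1 := by omega
  set k := i - a with hk
  set m := j - 2*a - 1 with hm
  set b := n - 1 - a with hb
  have hmb : m ≤ b := by omega
  refine ⟨Zb a ++ true :: Zb b, ?_⟩
  have C1 : Interleave (Zb (b - m)) (Zb b) (Zb (2*n - 1 - j)) :=
    interleave_Zb _ _ _ (by omega)
  have C2 : Interleave (Zb (b - m)) (true :: Zb b) (true :: Zb (2*n - 1 - j)) := .right C1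
  have C3 : Interleave (Zb m ++ Zb (b - m)) (Zb (a - k) ++ true :: Zb b)
      (Zb (j - i - 1) ++ true :: Zb (2*n - 1 - j)) :=
    interleave_append (interleave_Zb _ _ _ (by omega)) C2
  rw [Zb_add] at C3
  have hmbm : m + (b - m) = b := by omega
  rw [hmbm] at C3
  have C4 : Interleave (true :: Zb b) (Zb (a - k) ++ true :: Zb b)
      (true :: (Zb (j - i - 1) ++ true :: Zb (2*n - 1 - j))) := .left C3
  have C5 := interleave_append (interleave_Zb a k i (by omega)) C4
  rw [← List.append_assoc, Zb_add] at C5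
  have hka : k + (a - k) = a := by omega
  rw [hka] at C5
  exact C5

lemma main_eq (n : ℕ) (hn : 1 ≤ n) :
    {W : List Bool | W.length = 2 * n ∧ W.count true = 2 ∧ IsShuffleSquare W} =
      ↑((Tset n).image (fw n)) := by
  ext W
  simp only [Set.mem_setOf_eq, Finset.coe_image, Set.mem_image, Finset.mem_coe]
  constructor
  · rintro ⟨hlen, hcnt, U, hU⟩
    have hcU : U.count true = 1 := by
      have := interleave_count true hU; omega
    obtain ⟨a, b, rfl⟩ := count_one_decomp U hcU
    have hlU : 2 * n = 2 * (a + b + 1) := by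
      have := interleave_length hU
      simp only [List.length_append, List.length_cons, Zb, List.length_replicate] at this
      omega
    obtain ⟨i, g, hW, b1, b2, b3, b4⟩ := interB hU a b a b rfl rfl
    simp only [min_self, max_self] at b1 b4
    refine ⟨(i, i + g + 1), ?_, ?_⟩
    · exact mem_Tset.mpr ⟨by omega, by omega, by omega, by omega⟩
    · rw [hW]
      show fw n (i, i + g + 1) = _
      rw [fw]
      have e1 : (i, i + g + 1).2 - (i, i + g + 1).1 - 1 = g := by simp; omega
      have e2 : 2*n - 1 - (i, i + g + 1).2 = a + b + a + b - i - g := by simp; omega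
      rw [e1, e2]
      simp
  · rintro ⟨⟨i, j⟩, hT, rfl⟩
    obtain ⟨h1, h2, h3, h4⟩ := mem_Tset.mp hT
    refine ⟨?_, ?_, backward_shuffle hn h1 h2 h3 h4⟩
    · simp only [fw, Zb, List.length_append, List.length_cons, List.length_replicate]
      omega
    · simp [fw, Zb, List.count_append, List.count_cons, List.count_replicate]

lemma fw_injOn (n : ℕ) : ∀ p ∈ Tset n, ∀ q ∈ Tset n, fw n p = fw n q → p = q := by
  rintro ⟨i, j⟩ hp ⟨i', j'⟩ hq h
  obtain ⟨p1, -, -, -⟩ := mem_Tset.mp hp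
  obtain ⟨q1, -, -, -⟩ := mem_Tset.mp hq
  rw [fw, fw] at h
  obtain ⟨rfl, h2⟩ := decomp_inj _ _ _ _ h
  obtain ⟨e, -⟩ := decomp_inj _ _ _ _ h2
  simp only [Prod.mk.injEq, true_and]
  omega

theorem count_shuffle_squares_two_ones (n : ℕ) (hn : 1 ≤ n) :
    {W : List Bool | W.length = 2 * n ∧ W.count true = 2 ∧ IsShuffleSquare W}.ncard =
      3 * n * (n - 1) / 2 + 1 := by
  rw [main_eq n hn, Set.ncard_coe_finset, Finset.card_image_of_injOn (fw_injOn n),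
    card_Tset hn]
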